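/- (Energy decay for the Biot-JKD model.) Let η > 0, κ > 0, Ω > 0, m > 0 and ρ, ρ_f, ρ_w, λ₀, μ, β ∈ ℝ. Let u_s, W : ℝ² × ℝ → ℝ² be C² fields compactly supported in space for each time, set v_s = ∂u_s/∂t, w = ∂W/∂t, ε = (∇u_s + ∇u_sᵀ)/2, ξ = −div W, p = m(−β tr ε + ξ), σ = λ₀(tr ε) I + 2με − βpI, and let ψ : ℝ² × (0,∞) × ℝ → ℝ², (x, y, θ, t) ↦ ψ(θ), be C¹ in t with ∂ψ(θ)/∂t = −(θ + Ω)ψ(θ) + ∂w/∂t + Ω w for every θ > 0. Assume the fields satisfy ρ ∂v_s/∂t + ρ_f ∂w/∂t = div σ and ρ_f ∂v_s/∂t + ρ_w ∂w/∂t + (η/κ)(1/√Ω)(1/π) ∫₀^∞ θ^{−1/2} ψ(θ) dθ = −∇p, and assume all the θ-integrals below converge and differentiation under the integral sign is justified. Define E = E₁ + E₂ + E₃ with E₁ = (1/2)∫_{ℝ²}(ρ|v_s|² + ρ_w|w|² + 2ρ_f v_s·w) dx dy, E₂ = (1/2)∫_{ℝ²}(λ₀(tr ε)² + 2με:ε +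 p²/m) dx dy, and E₃ = (1/2)∫_{ℝ²}∫₀^∞ (η/κ)(1/π)(1/√(Ωθ))(1/(θ + 2Ω)) |w − ψ(θ)|² dθ dx dy. Then dE/dt = − ∫_{ℝ²}∫₀^∞ (η/κ)(1/π)(1/√(Ωθ))(1/(θ + 2Ω)) ( Ω|w|² + (θ + Ω)|ψ(θ)|² ) dθ dx dy ≤ 0. -/

import Mathlib

/-!
Dotting the first momentum equation with `v_s` and the second with `w` gives, pointwise,
kinetic power + elastic power = div(σ v_s − p w) − w · (viscous force), the elastic power being
`σ : ∇v_s − p div w` by the constitutive law and the symmetry of second derivatives. The divergence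
integrates to zero because the fields are compactly supported in space. The diffusive ODE turns
`(w − ψ)·∂ₜ(w − ψ)` into `(θ + 2Ω) w·ψ − (Ω|w|² + (θ + Ω)|ψ|²)`, and the weight of `E₃` times
`θ + 2Ω` is exactly the kernel `(η/κ)(1/√Ω)(1/π) θ^{-1/2}` of the viscous force, so the rate of
`E₃` cancels the viscous power and leaves `−D`.
-/

open MeasureTheory Real

/-- Partial derivative in the first (x) space variable, for functions of `(x, y, t)`. -/
noncomputable def pX (f : ℝ × ℝ × ℝ → ℝ) : ℝ × ℝ × ℝ → ℝ := fun q => fderiv ℝ f q (1, 0, 0)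

/-- Partial derivative in the second (y) space variable. -/
noncomputable def pY (f : ℝ × ℝ × ℝ → ℝ) : ℝ × ℝ × ℝ → ℝ := fun q => fderiv ℝ f q (0, 1, 0)

/-- Partial derivative in the time variable. -/
noncomputable def pT (f : ℝ × ℝ × ℝ → ℝ) : ℝ × ℝ × ℝ → ℝ := fun q => fderiv ℝ f q (0, 0, 1)

open Set

section SecondDerivatives

variable {E F : Type*} [NormedAddCommGroup E] [NormedSpace ℝ E]
  [NormedAddCommGroup F] [NormedSpace ℝ F] {f : E → F}

theorem ContDiff.fderiv_fderiv_apply_comm (hf : ContDiff ℝ 2 f) (x v w : E) :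
    fderiv ℝ (fun y => fderiv ℝ f y v) x w = fderiv ℝ (fun y => fderiv ℝ f y w) x v := by
  have hd : Differentiable ℝ (fderiv ℝ f) :=
    (hf.fderiv_right (by norm_num)).differentiable one_ne_zero
  simp only [fderiv_clm_apply (hd x) (differentiableAt_const _), fderiv_const_apply,
    ContinuousLinearMap.comp_zero, zero_add, ContinuousLinearMap.flip_apply]
  exact (hf.contDiffAt.isSymmSndFDerivAt (by simp)).eq w v

end SecondDerivatives

section PartialDerivatives

variable {f : ℝ × ℝ × ℝ → ℝ}

@[fun_prop]
theorem contDiff_pX (hf : ContDiff ℝ 2 f) : ContDiff ℝ 1 (pX f) := by unfold pX; fun_prop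

@[fun_prop]
theorem contDiff_pY (hf : ContDiff ℝ 2 f) : ContDiff ℝ 1 (pY f) := by unfold pY; fun_prop

@[fun_prop]
theorem contDiff_pT (hf : ContDiff ℝ 2 f) : ContDiff ℝ 1 (pT f) := by unfold pT; fun_prop

@[fun_prop]
theorem differentiable_pX (hf : ContDiff ℝ 2 f) : Differentiable ℝ (pX f) :=
  (contDiff_pX hf).differentiable one_ne_zero

@[fun_prop]
theorem differentiable_pY (hf : ContDiff ℝ 2 f) : Differentiable ℝ (pY f) :=
  (contDiff_pY hf).differentiable one_ne_zero

@[fun_prop]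
theorem differentiable_pT (hf : ContDiff ℝ 2 f) : Differentiable ℝ (pT f) :=
  (contDiff_pT hf).differentiable one_ne_zero

theorem pT_pX_comm (hf : ContDiff ℝ 2 f) (q : ℝ × ℝ × ℝ) : pT (pX f) q = pX (pT f) q :=
  hf.fderiv_fderiv_apply_comm q _ _

theorem pT_pY_comm (hf : ContDiff ℝ 2 f) (q : ℝ × ℝ × ℝ) : pT (pY f) q = pY (pT f) q :=
  hf.fderiv_fderiv_apply_comm q _ _

theorem pT_eq_zero_of_notMem {K : Set (ℝ × ℝ)} (hK : IsClosed K)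
    (hf : ∀ x y t, (x, y) ∉ K → f (x, y, t) = 0) {x y t : ℝ} (hxy : (x, y) ∉ K) :
    pT f (x, y, t) = 0 := by
  have hcyl : IsClosed {q : ℝ × ℝ × ℝ | (q.1, q.2.1) ∈ K} := hK.preimage (by fun_prop)
  have hsupp : Function.support f ⊆ {q | (q.1, q.2.1) ∈ K} := fun q hq =>
    by_contra fun hqK => hq (hf q.1 q.2.1 q.2.2 hqK)
  have hnot : (x, y, t) ∉ tsupport f := fun h => hxy (closure_minimal hsupp hcyl h)
  simp [pT, fderiv_of_notMem_tsupport ℝ hnot]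

theorem pX_add_pY_flux {σxx σxy σyy p v₁ v₂ w₁ w₂ : ℝ × ℝ × ℝ → ℝ} {q : ℝ × ℝ × ℝ}
    (hσxx : DifferentiableAt ℝ σxx q) (hσxy : DifferentiableAt ℝ σxy q)
    (hσyy : DifferentiableAt ℝ σyy q) (hp : DifferentiableAt ℝ p q)
    (hv₁ : DifferentiableAt ℝ v₁ q) (hv₂ : DifferentiableAt ℝ v₂ q)
    (hw₁ : DifferentiableAt ℝ w₁ q) (hw₂ : DifferentiableAt ℝ w₂ q) :
    pX (fun x => σxx x * v₁ x + σxy x * v₂ x - p x * w₁ x) q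
        + pY (fun x => σxy x * v₁ x + σyy x * v₂ x - p x * w₂ x) q
      = (pX σxx q + pY σxy q) * v₁ q + (pX σxy q + pY σyy q) * v₂ q
          - pX p q * w₁ q - pY p q * w₂ q
        + (σxx q * pX v₁ q + σxy q * (pY v₁ q + pX v₂ q) + σyy q * pY v₂ q
          - p q * (pX w₁ q + pY w₂ q)) := by
  simp (disch := fun_prop) only [pX, pY, fderiv_fun_sub, fderiv_fun_add, fderiv_fun_mul,
    sub_apply, add_apply, smul_apply, smul_eq_mul]
  ring

end PartialDerivatives

theorem elasticPower_eq
    {us₁ us₂ W₁ W₂ v₁ v₂ w₁ w₂ εxx εyy εxy trε ξ p σxx σyy σxy : ℝ × ℝ × ℝ → ℝ}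
    {m lam0 μ β : ℝ}
    (hus₁ : ContDiff ℝ 2 us₁) (hus₂ : ContDiff ℝ 2 us₂)
    (hW₁ : ContDiff ℝ 2 W₁) (hW₂ : ContDiff ℝ 2 W₂)
    (hv₁ : v₁ = pT us₁) (hv₂ : v₂ = pT us₂)
    (hw₁ : w₁ = pT W₁) (hw₂ : w₂ = pT W₂)
    (hεxx : εxx = pX us₁) (hεyy : εyy = pY us₂)
    (hεxy : εxy = fun q => (pY us₁ q + pX us₂ q) / 2)
    (htrε : trε = fun q => εxx q + εyy q)
    (hξ : ξ = fun q => -(pX W₁ q + pY W₂ q))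
    (hp : p = fun q => m * (-β * trε q + ξ q))
    (hσxx : σxx = fun q => lam0 * trε q + 2 * μ * εxx q - β * p q)
    (hσyy : σyy = fun q => lam0 * trε q + 2 * μ * εyy q - β * p q)
    (hσxy : σxy = fun q => 2 * μ * εxy q) (q : ℝ × ℝ × ℝ) :
    lam0 * trε q * pT trε q
        + 2 * μ * (εxx q * pT εxx q + 2 * εxy q * pT εxy q + εyy q * pT εyy q)
        + p q * pT p q / m
      = σxx q * pX v₁ q + σxy q * (pY v₁ q + pX v₂ q) + σyy q * pY v₂ q
        - p q * (pX w₁ q + pY w₂ q) := by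
  subst_vars
  rw [← pT_pX_comm hus₁, ← pT_pY_comm hus₁, ← pT_pX_comm hus₂, ← pT_pY_comm hus₂,
    ← pT_pX_comm hW₁, ← pT_pY_comm hW₂]
  simp (disch := fun_prop) only [pT, div_eq_mul_inv, fderiv_fun_add, fderiv_const_mul,
    fderiv_fun_neg, fderiv_mul_const, add_apply, smul_apply, neg_apply, smul_eq_mul]
  -- `p q * pT p q / m` is read with `x / 0 = 0`; at `m = 0` the pressure vanishes anyway.
  rcases eq_or_ne m 0 with rfl | hm
  · simp only [zero_mul, mul_zero, sub_zero, add_zero]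
    ring
  · field_simp
    ring

section Divergence

variable {E : Type*} [NormedAddCommGroup E] [NormedSpace ℝ E]
  [MeasurableSpace E] [BorelSpace E] {μ : Measure E} {g : E → ℝ}

theorem integrable_fderiv_apply_of_hasCompactSupport [IsFiniteMeasureOnCompacts μ]
    (hg : ContDiff ℝ 1 g) (hsupp : HasCompactSupport g) (v : E) :
    Integrable (fun x => fderiv ℝ g x v) μ :=
  (hg.continuous_fderiv_apply one_ne_zero |>.comp (continuous_id.prodMk continuous_const)
    |>.integrable_of_hasCompactSupport (hsupp.fderiv_apply ℝ v))

theorem integral_fderiv_apply_eq_zero_of_hasCompactSupport [FiniteDimensional ℝ E]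
    [μ.IsAddHaarMeasure] (hg : ContDiff ℝ 1 g) (hsupp : HasCompactSupport g) (v : E) :
    ∫ x, fderiv ℝ g x v ∂μ = 0 := by
  have h := integral_mul_fderiv_eq_neg_fderiv_mul_of_integrable (μ := μ)
    (f := fun _ => (1 : ℝ)) (g := g) (v := v) (by simp)
    (by simpa using integrable_fderiv_apply_of_hasCompactSupport hg hsupp v)
    (by simpa using hg.continuous.integrable_of_hasCompactSupport hsupp)
    (fun _ _ => differentiableAt_const _) (fun x _ => hg.differentiable one_ne_zero x)
  simpa using h

end Divergence

theorem fderiv_slice_apply {F : ℝ × ℝ × ℝ → ℝ} {t : ℝ} {s : ℝ × ℝ}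
    (hF : DifferentiableAt ℝ F (s.1, s.2, t)) (a b : ℝ) :
    fderiv ℝ (fun s : ℝ × ℝ => F (s.1, s.2, t)) s (a, b) = fderiv ℝ F (s.1, s.2, t) (a, b, 0) := by
  have hemb : HasFDerivAt (fun s : ℝ × ℝ => ((s.1, s.2, t) : ℝ × ℝ × ℝ))
      ((ContinuousLinearMap.fst ℝ ℝ ℝ).prod ((ContinuousLinearMap.snd ℝ ℝ ℝ).prod 0)) s :=
    hasFDerivAt_fst.prodMk (hasFDerivAt_snd.prodMk (hasFDerivAt_const t s))
  change fderiv ℝ (F ∘ fun s : ℝ × ℝ => ((s.1, s.2, t) : ℝ × ℝ × ℝ)) s (a, b) = _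
  rw [(hF.hasFDerivAt.comp s hemb).fderiv]
  rfl

theorem integral_pX_add_pY_eq_zero {F G : ℝ × ℝ × ℝ → ℝ} (hF : ContDiff ℝ 1 F)
    (hG : ContDiff ℝ 1 G) {K : Set (ℝ × ℝ)} (hK : IsCompact K)
    (hFK : ∀ x y t, (x, y) ∉ K → F (x, y, t) = 0) (hGK : ∀ x y t, (x, y) ∉ K → G (x, y, t) = 0)
    (t : ℝ) :
    Integrable (fun s : ℝ × ℝ => pX F (s.1, s.2, t) + pY G (s.1, s.2, t)) ∧
      ∫ s : ℝ × ℝ, (pX F (s.1, s.2, t) + pY G (s.1, s.2, t)) = 0 := by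
  have hslice {H : ℝ × ℝ × ℝ → ℝ} (hH : ContDiff ℝ 1 H) :
      ContDiff ℝ 1 fun s : ℝ × ℝ => H (s.1, s.2, t) :=
    hH.comp (by fun_prop)
  have hsupp {H : ℝ × ℝ × ℝ → ℝ} (hHK : ∀ x y t, (x, y) ∉ K → H (x, y, t) = 0) :
      HasCompactSupport fun s : ℝ × ℝ => H (s.1, s.2, t) :=
    HasCompactSupport.intro hK fun s hs => hHK s.1 s.2 t hs
  have hX : (fun s : ℝ × ℝ => pX F (s.1, s.2, t))
      = fun s => fderiv ℝ (fun s : ℝ × ℝ => F (s.1, s.2, t)) s (1, 0) :=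
    funext fun s => (fderiv_slice_apply (hF.differentiable one_ne_zero _) 1 0).symm
  have hY : (fun s : ℝ × ℝ => pY G (s.1, s.2, t))
      = fun s => fderiv ℝ (fun s : ℝ × ℝ => G (s.1, s.2, t)) s (0, 1) :=
    funext fun s => (fderiv_slice_apply (hG.differentiable one_ne_zero _) 0 1).symm
  have hintX : Integrable fun s : ℝ × ℝ => pX F (s.1, s.2, t) :=
    hX ▸ integrable_fderiv_apply_of_hasCompactSupport (hslice hF) (hsupp hFK) (1, 0)
  have hintY : Integrable fun s : ℝ × ℝ => pY G (s.1, s.2, t) :=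
    hY ▸ integrable_fderiv_apply_of_hasCompactSupport (hslice hG) (hsupp hGK) (0, 1)
  refine ⟨hintX.add hintY, ?_⟩
  rw [integral_add hintX hintY, hX, hY,
    integral_fderiv_apply_eq_zero_of_hasCompactSupport (hslice hF) (hsupp hFK),
    integral_fderiv_apply_eq_zero_of_hasCompactSupport (hslice hG) (hsupp hGK), add_zero]

theorem integral_sub_eq_neg_of_integral_eq_zero {α : Type*} [MeasurableSpace α] {μ : Measure α}
    {f g : α → ℝ} (hf : Integrable f μ) (hf0 : ∫ x, f x ∂μ = 0) :
    ∫ x, (f x - g x) ∂μ = -∫ x, g x ∂μ := by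
  by_cases hg : Integrable g μ
  · rw [integral_sub hf hg, hf0, zero_sub]
  · have hfg : ¬Integrable (fun x => f x - g x) μ :=
      fun h => hg ((hf.sub h).congr (.of_forall fun x => by simp))
    rw [integral_undef hg, integral_undef hfg, neg_zero]

theorem jkdWeight_mul_add {θ Ω : ℝ} (η κ : ℝ) (hθ : 0 < θ) (hΩ : 0 ≤ Ω) :
    (η / κ) * (1 / π) * (1 / √(Ω * θ)) * (1 / (θ + 2 * Ω)) * (θ + 2 * Ω)
      = (η / κ) * (1 / √Ω) * (1 / π) * θ ^ (-(1 / 2 : ℝ)) := by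
  have hθΩ : θ + 2 * Ω ≠ 0 := by positivity
  rw [Real.rpow_neg hθ.le, ← Real.sqrt_eq_rpow, Real.sqrt_mul hΩ]
  field_simp

theorem diffusive_power_eq {θ Ω w w' ψ ψ' : ℝ} (hψ' : ψ' = -(θ + Ω) * ψ + w' + Ω * w) :
    (w - ψ) * (w' - ψ') = (θ + 2 * Ω) * (w * ψ) - (Ω * w ^ 2 + (θ + Ω) * ψ ^ 2) := by
  rw [hψ']; ring

theorem setIntegral_diffusive_power_eq {Ω A w₁ w₂ w₁' w₂' : ℝ} {c ψ₁ ψ₂ ψ₁' ψ₂' : ℝ → ℝ}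
    (hc : ∀ θ, 0 < θ → c θ * (θ + 2 * Ω) = A * θ ^ (-(1 / 2 : ℝ)))
    (hψ₁' : ∀ θ, 0 < θ → ψ₁' θ = -(θ + Ω) * ψ₁ θ + w₁' + Ω * w₁)
    (hψ₂' : ∀ θ, 0 < θ → ψ₂' θ = -(θ + Ω) * ψ₂ θ + w₂' + Ω * w₂)
    (hψ₁ : IntegrableOn (fun θ => θ ^ (-(1 / 2 : ℝ)) * ψ₁ θ) (Ioi 0))
    (hψ₂ : IntegrableOn (fun θ => θ ^ (-(1 / 2 : ℝ)) * ψ₂ θ) (Ioi 0))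
    (hD : IntegrableOn
      (fun θ => c θ * (Ω * (w₁ ^ 2 + w₂ ^ 2) + (θ + Ω) * (ψ₁ θ ^ 2 + ψ₂ θ ^ 2))) (Ioi 0)) :
    ∫ θ in Ioi 0, c θ * ((w₁ - ψ₁ θ) * (w₁' - ψ₁' θ) + (w₂ - ψ₂ θ) * (w₂' - ψ₂' θ))
      = A * (w₁ * ∫ θ in Ioi 0, θ ^ (-(1 / 2 : ℝ)) * ψ₁ θ)
          + A * (w₂ * ∫ θ in Ioi 0, θ ^ (-(1 / 2 : ℝ)) * ψ₂ θ)
        - ∫ θ in Ioi 0, c θ * (Ω * (w₁ ^ 2 + w₂ ^ 2) + (θ + Ω) * (ψ₁ θ ^ 2 + ψ₂ θ ^ 2)) := by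
  have hpt : EqOn
      (fun θ => c θ * ((w₁ - ψ₁ θ) * (w₁' - ψ₁' θ) + (w₂ - ψ₂ θ) * (w₂' - ψ₂' θ)))
      (fun θ => A * (w₁ * (θ ^ (-(1 / 2 : ℝ)) * ψ₁ θ)) + A * (w₂ * (θ ^ (-(1 / 2 : ℝ)) * ψ₂ θ))
        - c θ * (Ω * (w₁ ^ 2 + w₂ ^ 2) + (θ + Ω) * (ψ₁ θ ^ 2 + ψ₂ θ ^ 2))) (Ioi 0) := by
    intro θ hθ
    simp only [diffusive_power_eq (hψ₁' θ hθ), diffusive_power_eq (hψ₂' θ hθ)]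
    linear_combination (w₁ * ψ₁ θ + w₂ * ψ₂ θ) * hc θ hθ
  have hψ₁A := (hψ₁.const_mul w₁).const_mul A
  have hψ₂A := (hψ₂.const_mul w₂).const_mul A
  rw [setIntegral_congr_fun measurableSet_Ioi hpt, integral_sub (hψ₁A.fun_add hψ₂A) hD,
    integral_add hψ₁A hψ₂A, integral_const_mul, integral_const_mul, integral_const_mul,
    integral_const_mul]

theorem biot_jkd_energy_decay_general
    (η κ Ω m : ℝ) (hη : 0 < η) (hκ : 0 < κ) (hΩ : 0 < Ω)
    (ρ ρf ρw lam0 μ β : ℝ)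
    (us₁ us₂ W₁ W₂ : ℝ × ℝ × ℝ → ℝ)
    (hus₁ : ContDiff ℝ 2 us₁) (hus₂ : ContDiff ℝ 2 us₂)
    (hW₁ : ContDiff ℝ 2 W₁) (hW₂ : ContDiff ℝ 2 W₂)
    (K : Set (ℝ × ℝ)) (hK : IsCompact K)
    (hsupp : ∀ x y t : ℝ, (x, y) ∉ K →
      us₁ (x, y, t) = 0 ∧ us₂ (x, y, t) = 0 ∧ W₁ (x, y, t) = 0 ∧ W₂ (x, y, t) = 0)
    -- velocities, strain, fluid content, pressure and stress
    (v₁ v₂ w₁ w₂ εxx εyy εxy trε ξ p σxx σyy σxy : ℝ × ℝ × ℝ → ℝ)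
    (hv₁ : v₁ = pT us₁) (hv₂ : v₂ = pT us₂)
    (hw₁ : w₁ = pT W₁) (hw₂ : w₂ = pT W₂)
    (hεxx : εxx = pX us₁) (hεyy : εyy = pY us₂)
    (hεxy : εxy = fun q => (pY us₁ q + pX us₂ q) / 2)
    (htrε : trε = fun q => εxx q + εyy q)
    (hξ : ξ = fun q => -(pX W₁ q + pY W₂ q))
    (hp : p = fun q => m * (-β * trε q + ξ q))
    (hσxx : σxx = fun q => lam0 * trε q + 2 * μ * εxx q - β * p q)
    (hσyy : σyy = fun q => lam0 * trε q + 2 * μ * εyy q - β * p q)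
    (hσxy : σxy = fun q => 2 * μ * εxy q)
    -- diffusive variables ψ(x, y, θ, t), C¹ in time, satisfying the local ODE
    (ψ₁ ψ₂ : ℝ × ℝ → ℝ → ℝ → ℝ)
    (hode₁ : ∀ (s : ℝ × ℝ) (θ t : ℝ), 0 < θ →
      HasDerivAt (fun τ => ψ₁ s θ τ)
        (-(θ + Ω) * ψ₁ s θ t + pT w₁ (s.1, s.2, t) + Ω * w₁ (s.1, s.2, t)) t)
    (hode₂ : ∀ (s : ℝ × ℝ) (θ t : ℝ), 0 < θ →
      HasDerivAt (fun τ => ψ₂ s θ τ)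
        (-(θ + Ω) * ψ₂ s θ t + pT w₂ (s.1, s.2, t) + Ω * w₂ (s.1, s.2, t)) t)
    -- conservation of momentum, with the diffusive representation of the dissipation
    (hmom1x : ∀ q : ℝ × ℝ × ℝ, ρ * pT v₁ q + ρf * pT w₁ q = pX σxx q + pY σxy q)
    (hmom1y : ∀ q : ℝ × ℝ × ℝ, ρ * pT v₂ q + ρf * pT w₂ q = pX σxy q + pY σyy q)
    (hmom2x : ∀ (s : ℝ × ℝ) (t : ℝ),
      ρf * pT v₁ (s.1, s.2, t) + ρw * pT w₁ (s.1, s.2, t) +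
        (η / κ) * (1 / Real.sqrt Ω) * (1 / π) *
          (∫ θ in Set.Ioi (0 : ℝ), θ ^ (-(1/2 : ℝ)) * ψ₁ s θ t)
        = -(pX p (s.1, s.2, t)))
    (hmom2y : ∀ (s : ℝ × ℝ) (t : ℝ),
      ρf * pT v₂ (s.1, s.2, t) + ρw * pT w₂ (s.1, s.2, t) +
        (η / κ) * (1 / Real.sqrt Ω) * (1 / π) *
          (∫ θ in Set.Ioi (0 : ℝ), θ ^ (-(1/2 : ℝ)) * ψ₂ s θ t)
        = -(pY p (s.1, s.2, t)))
    -- the weight of the θ-integrals in E₃ and in the dissipation rate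
    (c : ℝ → ℝ)
    (hc : c = fun θ => (η / κ) * (1 / π) * (1 / Real.sqrt (Ω * θ)) * (1 / (θ + 2 * Ω)))
    -- the energies
    (E : ℝ → ℝ)
    -- convergence of the θ-integrals
    (hintψ : ∀ (s : ℝ × ℝ) (t : ℝ),
      IntegrableOn (fun θ => θ ^ (-(1/2 : ℝ)) * ψ₁ s θ t) (Set.Ioi 0) volume ∧
      IntegrableOn (fun θ => θ ^ (-(1/2 : ℝ)) * ψ₂ s θ t) (Set.Ioi 0) volume)
    (hintD : ∀ (s : ℝ × ℝ) (t : ℝ),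
      IntegrableOn (fun θ =>
        c θ * (Ω * (w₁ (s.1, s.2, t) ^ 2 + w₂ (s.1, s.2, t) ^ 2)
          + (θ + Ω) * (ψ₁ s θ t ^ 2 + ψ₂ s θ t ^ 2))) (Set.Ioi 0) volume)
    -- differentiation under the integral sign is justified
    (hswap : ∀ t : ℝ,
      HasDerivAt E
        (∫ s : ℝ × ℝ,
          ((ρ * (v₁ (s.1, s.2, t) * pT v₁ (s.1, s.2, t) + v₂ (s.1, s.2, t) * pT v₂ (s.1, s.2, t))
            + ρw * (w₁ (s.1, s.2, t) * pT w₁ (s.1, s.2, t) + w₂ (s.1, s.2, t) * pT w₂ (s.1, s.2, t))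
            + ρf * (pT v₁ (s.1, s.2, t) * w₁ (s.1, s.2, t) + v₁ (s.1, s.2, t) * pT w₁ (s.1, s.2, t)
              + pT v₂ (s.1, s.2, t) * w₂ (s.1, s.2, t) + v₂ (s.1, s.2, t) * pT w₂ (s.1, s.2, t)))
          + (lam0 * trε (s.1, s.2, t) * pT trε (s.1, s.2, t)
            + 2 * μ * (εxx (s.1, s.2, t) * pT εxx (s.1, s.2, t)
              + 2 * εxy (s.1, s.2, t) * pT εxy (s.1, s.2, t)
              + εyy (s.1, s.2, t) * pT εyy (s.1, s.2, t))
            + p (s.1, s.2, t) * pT p (s.1, s.2, t) / m)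
          + ∫ θ in Set.Ioi (0 : ℝ),
              c θ * ((w₁ (s.1, s.2, t) - ψ₁ s θ t) * (pT w₁ (s.1, s.2, t) - deriv (ψ₁ s θ) t)
                + (w₂ (s.1, s.2, t) - ψ₂ s θ t) * (pT w₂ (s.1, s.2, t) - deriv (ψ₂ s θ) t)))) t)
    -- the dissipation rate
    (D : ℝ → ℝ)
    (hD : D = fun t => ∫ s : ℝ × ℝ, ∫ θ in Set.Ioi (0 : ℝ),
      c θ * (Ω * (w₁ (s.1, s.2, t) ^ 2 + w₂ (s.1, s.2, t) ^ 2)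
        + (θ + Ω) * (ψ₁ s θ t ^ 2 + ψ₂ s θ t ^ 2))) :
    ∀ t : ℝ, HasDerivAt E (-(D t)) t ∧ -(D t) ≤ 0 := by
  intro t
  have hweight : ∀ θ, 0 < θ →
      c θ * (θ + 2 * Ω) = (η / κ) * (1 / Real.sqrt Ω) * (1 / π) * θ ^ (-(1 / 2 : ℝ)) :=
    fun θ hθ => hc ▸ jkdWeight_mul_add η κ hθ hΩ.le
  have hD_nonneg : 0 ≤ D t := by
    subst hD hc
    exact integral_nonneg fun s => setIntegral_nonneg measurableSet_Ioi fun θ (hθ : 0 < θ) => by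
      positivity
  refine ⟨?_, neg_nonpos.2 hD_nonneg⟩
  obtain ⟨hσxx', hσxy', hσyy', hp', hv₁', hv₂', hw₁', hw₂'⟩ :
      ContDiff ℝ 1 σxx ∧ ContDiff ℝ 1 σxy ∧ ContDiff ℝ 1 σyy ∧ ContDiff ℝ 1 p ∧
        ContDiff ℝ 1 v₁ ∧ ContDiff ℝ 1 v₂ ∧ ContDiff ℝ 1 w₁ ∧ ContDiff ℝ 1 w₂ := by
    subst_vars
    refine ⟨?_, ?_, ?_, ?_, ?_, ?_, ?_, ?_⟩ <;> fun_prop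
  have hvel : ∀ x y t, (x, y) ∉ K →
      v₁ (x, y, t) = 0 ∧ v₂ (x, y, t) = 0 ∧ w₁ (x, y, t) = 0 ∧ w₂ (x, y, t) = 0 := by
    intro x y t hxy
    subst hv₁ hv₂ hw₁ hw₂
    exact ⟨pT_eq_zero_of_notMem hK.isClosed (fun x y t h => (hsupp x y t h).1) hxy,
      pT_eq_zero_of_notMem hK.isClosed (fun x y t h => (hsupp x y t h).2.1) hxy,
      pT_eq_zero_of_notMem hK.isClosed (fun x y t h => (hsupp x y t h).2.2.1) hxy,
      pT_eq_zero_of_notMem hK.isClosed (fun x y t h => (hsupp x y t h).2.2.2) hxy⟩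
  obtain ⟨hdiv_int, hdiv_zero⟩ := integral_pX_add_pY_eq_zero
    (F := fun x => σxx x * v₁ x + σxy x * v₂ x - p x * w₁ x)
    (G := fun x => σxy x * v₁ x + σyy x * v₂ x - p x * w₂ x) (by fun_prop) (by fun_prop) hK
    (fun x y t hxy => by simp [hvel x y t hxy]) (fun x y t hxy => by simp [hvel x y t hxy]) t
  convert hswap t using 1
  rw [hD, ← integral_sub_eq_neg_of_integral_eq_zero hdiv_int hdiv_zero]
  refine integral_congr_ae (.of_forall fun s => ?_)
  dsimp only
  rw [setIntegral_diffusive_power_eq (ψ₁' := fun θ => deriv (ψ₁ s θ) t)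
    (ψ₂' := fun θ => deriv (ψ₂ s θ) t) hweight (fun θ hθ => (hode₁ s θ t hθ).deriv)
    (fun θ hθ => (hode₂ s θ t hθ).deriv) (hintψ s t).1 (hintψ s t).2 (hintD s t)]
  linear_combination
    pX_add_pY_flux (q := (s.1, s.2, t))
      (hσxx'.differentiable one_ne_zero _) (hσxy'.differentiable one_ne_zero _)
      (hσyy'.differentiable one_ne_zero _) (hp'.differentiable one_ne_zero _)
      (hv₁'.differentiable one_ne_zero _) (hv₂'.differentiable one_ne_zero _)
      (hw₁'.differentiable one_ne_zero _) (hw₂'.differentiable one_ne_zero _)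
    - elasticPower_eq hus₁ hus₂ hW₁ hW₂ hv₁ hv₂ hw₁ hw₂ hεxx hεyy hεxy htrε hξ hp hσxx hσyy hσxy
      (s.1, s.2, t)
    - v₁ (s.1, s.2, t) * hmom1x (s.1, s.2, t) - v₂ (s.1, s.2, t) * hmom1y (s.1, s.2, t)
    - w₁ (s.1, s.2, t) * hmom2x s t - w₂ (s.1, s.2, t) * hmom2y s t

/-- Energy decay for the 2D Biot-JKD model, with the viscous dissipation written
through its diffusive representation: `dE/dt = −D(t) ≤ 0` where `E = E₁+E₂+E₃` and
`D(t) = ∫_{ℝ²}∫₀^∞ (η/κ)(1/π)(1/√(Ωθ))(1/(θ+2Ω)) (Ω|w|² + (θ+Ω)|ψ(θ)|²) dθ dx dy`. -/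
theorem biot_jkd_energy_decay
    (η κ Ω m : ℝ) (hη : 0 < η) (hκ : 0 < κ) (hΩ : 0 < Ω) (hm : 0 < m)
    (ρ ρf ρw lam0 μ β : ℝ)
    (us₁ us₂ W₁ W₂ : ℝ × ℝ × ℝ → ℝ)
    (hus₁ : ContDiff ℝ 2 us₁) (hus₂ : ContDiff ℝ 2 us₂)
    (hW₁ : ContDiff ℝ 2 W₁) (hW₂ : ContDiff ℝ 2 W₂)
    (K : Set (ℝ × ℝ)) (hK : IsCompact K)
    (hsupp : ∀ x y t : ℝ, (x, y) ∉ K →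
      us₁ (x, y, t) = 0 ∧ us₂ (x, y, t) = 0 ∧ W₁ (x, y, t) = 0 ∧ W₂ (x, y, t) = 0)
    -- velocities, strain, fluid content, pressure and stress
    (v₁ v₂ w₁ w₂ εxx εyy εxy trε ξ p σxx σyy σxy : ℝ × ℝ × ℝ → ℝ)
    (hv₁ : v₁ = pT us₁) (hv₂ : v₂ = pT us₂)
    (hw₁ : w₁ = pT W₁) (hw₂ : w₂ = pT W₂)
    (hεxx : εxx = pX us₁) (hεyy : εyy = pY us₂)
    (hεxy : εxy = fun q => (pY us₁ q + pX us₂ q) / 2)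
    (htrε : trε = fun q => εxx q + εyy q)
    (hξ : ξ = fun q => -(pX W₁ q + pY W₂ q))
    (hp : p = fun q => m * (-β * trε q + ξ q))
    (hσxx : σxx = fun q => lam0 * trε q + 2 * μ * εxx q - β * p q)
    (hσyy : σyy = fun q => lam0 * trε q + 2 * μ * εyy q - β * p q)
    (hσxy : σxy = fun q => 2 * μ * εxy q)
    -- diffusive variables ψ(x, y, θ, t), C¹ in time, satisfying the local ODE
    (ψ₁ ψ₂ : ℝ × ℝ → ℝ → ℝ → ℝ)
    (hode₁ : ∀ (s : ℝ × ℝ) (θ t : ℝ), 0 < θ →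
      HasDerivAt (fun τ => ψ₁ s θ τ)
        (-(θ + Ω) * ψ₁ s θ t + pT w₁ (s.1, s.2, t) + Ω * w₁ (s.1, s.2, t)) t)
    (hode₂ : ∀ (s : ℝ × ℝ) (θ t : ℝ), 0 < θ →
      HasDerivAt (fun τ => ψ₂ s θ τ)
        (-(θ + Ω) * ψ₂ s θ t + pT w₂ (s.1, s.2, t) + Ω * w₂ (s.1, s.2, t)) t)
    -- conservation of momentum, with the diffusive representation of the dissipation
    (hmom1x : ∀ q : ℝ × ℝ × ℝ, ρ * pT v₁ q + ρf * pT w₁ q = pX σxx q + pY σxy q)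
    (hmom1y : ∀ q : ℝ × ℝ × ℝ, ρ * pT v₂ q + ρf * pT w₂ q = pX σxy q + pY σyy q)
    (hmom2x : ∀ (s : ℝ × ℝ) (t : ℝ),
      ρf * pT v₁ (s.1, s.2, t) + ρw * pT w₁ (s.1, s.2, t) +
        (η / κ) * (1 / Real.sqrt Ω) * (1 / π) *
          (∫ θ in Set.Ioi (0 : ℝ), θ ^ (-(1/2 : ℝ)) * ψ₁ s θ t)
        = -(pX p (s.1, s.2, t)))
    (hmom2y : ∀ (s : ℝ × ℝ) (t : ℝ),
      ρf * pT v₂ (s.1, s.2, t) + ρw * pT w₂ (s.1, s.2, t) +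
        (η / κ) * (1 / Real.sqrt Ω) * (1 / π) *
          (∫ θ in Set.Ioi (0 : ℝ), θ ^ (-(1/2 : ℝ)) * ψ₂ s θ t)
        = -(pY p (s.1, s.2, t)))
    -- the weight of the θ-integrals in E₃ and in the dissipation rate
    (c : ℝ → ℝ)
    (hc : c = fun θ => (η / κ) * (1 / π) * (1 / Real.sqrt (Ω * θ)) * (1 / (θ + 2 * Ω)))
    -- the energies
    (E₁ E₂ E₃ E : ℝ → ℝ)
    (hE₁ : E₁ = fun t => (1/2) * ∫ s : ℝ × ℝ,
      (ρ * (v₁ (s.1, s.2, t) ^ 2 + v₂ (s.1, s.2, t) ^ 2)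
        + ρw * (w₁ (s.1, s.2, t) ^ 2 + w₂ (s.1, s.2, t) ^ 2)
        + 2 * ρf * (v₁ (s.1, s.2, t) * w₁ (s.1, s.2, t) + v₂ (s.1, s.2, t) * w₂ (s.1, s.2, t))))
    (hE₂ : E₂ = fun t => (1/2) * ∫ s : ℝ × ℝ,
      (lam0 * trε (s.1, s.2, t) ^ 2
        + 2 * μ * (εxx (s.1, s.2, t) ^ 2 + 2 * εxy (s.1, s.2, t) ^ 2 + εyy (s.1, s.2, t) ^ 2)
        + p (s.1, s.2, t) ^ 2 / m))
    (hE₃ : E₃ = fun t => (1/2) * ∫ s : ℝ × ℝ, ∫ θ in Set.Ioi (0 : ℝ),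
      c θ * ((w₁ (s.1, s.2, t) - ψ₁ s θ t) ^ 2 + (w₂ (s.1, s.2, t) - ψ₂ s θ t) ^ 2))
    (hE : E = fun t => E₁ t + E₂ t + E₃ t)
    -- convergence of the θ-integrals
    (hintψ : ∀ (s : ℝ × ℝ) (t : ℝ),
      IntegrableOn (fun θ => θ ^ (-(1/2 : ℝ)) * ψ₁ s θ t) (Set.Ioi 0) volume ∧
      IntegrableOn (fun θ => θ ^ (-(1/2 : ℝ)) * ψ₂ s θ t) (Set.Ioi 0) volume)
    (hintE₃ : ∀ (s : ℝ × ℝ) (t : ℝ),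
      IntegrableOn (fun θ =>
        c θ * ((w₁ (s.1, s.2, t) - ψ₁ s θ t) ^ 2 + (w₂ (s.1, s.2, t) - ψ₂ s θ t) ^ 2))
        (Set.Ioi 0) volume)
    (hintdE₃ : ∀ (s : ℝ × ℝ) (t : ℝ),
      IntegrableOn (fun θ =>
        c θ * ((w₁ (s.1, s.2, t) - ψ₁ s θ t) * (pT w₁ (s.1, s.2, t) - deriv (ψ₁ s θ) t)
          + (w₂ (s.1, s.2, t) - ψ₂ s θ t) * (pT w₂ (s.1, s.2, t) - deriv (ψ₂ s θ) t)))
        (Set.Ioi 0) volume)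
    (hintD : ∀ (s : ℝ × ℝ) (t : ℝ),
      IntegrableOn (fun θ =>
        c θ * (Ω * (w₁ (s.1, s.2, t) ^ 2 + w₂ (s.1, s.2, t) ^ 2)
          + (θ + Ω) * (ψ₁ s θ t ^ 2 + ψ₂ s θ t ^ 2))) (Set.Ioi 0) volume)
    -- differentiation under the integral sign is justified
    (hswap : ∀ t : ℝ,
      HasDerivAt E
        (∫ s : ℝ × ℝ,
          ((ρ * (v₁ (s.1, s.2, t) * pT v₁ (s.1, s.2, t) + v₂ (s.1, s.2, t) * pT v₂ (s.1, s.2, t))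
            + ρw * (w₁ (s.1, s.2, t) * pT w₁ (s.1, s.2, t) + w₂ (s.1, s.2, t) * pT w₂ (s.1, s.2, t))
            + ρf * (pT v₁ (s.1, s.2, t) * w₁ (s.1, s.2, t) + v₁ (s.1, s.2, t) * pT w₁ (s.1, s.2, t)
              + pT v₂ (s.1, s.2, t) * w₂ (s.1, s.2, t) + v₂ (s.1, s.2, t) * pT w₂ (s.1, s.2, t)))
          + (lam0 * trε (s.1, s.2, t) * pT trε (s.1, s.2, t)
            + 2 * μ * (εxx (s.1, s.2, t) * pT εxx (s.1, s.2, t)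
              + 2 * εxy (s.1, s.2, t) * pT εxy (s.1, s.2, t)
              + εyy (s.1, s.2, t) * pT εyy (s.1, s.2, t))
            + p (s.1, s.2, t) * pT p (s.1, s.2, t) / m)
          + ∫ θ in Set.Ioi (0 : ℝ),
              c θ * ((w₁ (s.1, s.2, t) - ψ₁ s θ t) * (pT w₁ (s.1, s.2, t) - deriv (ψ₁ s θ) t)
                + (w₂ (s.1, s.2, t) - ψ₂ s θ t) * (pT w₂ (s.1, s.2, t) - deriv (ψ₂ s θ) t)))) t)
    -- the dissipation rate
    (D : ℝ → ℝ)
    (hD : D = fun t => ∫ s : ℝ × ℝ, ∫ θ in Set.Ioi (0 : ℝ),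
      c θ * (Ω * (w₁ (s.1, s.2, t) ^ 2 + w₂ (s.1, s.2, t) ^ 2)
        + (θ + Ω) * (ψ₁ s θ t ^ 2 + ψ₂ s θ t ^ 2))) :
    ∀ t : ℝ, HasDerivAt E (-(D t)) t ∧ -(D t) ≤ 0 :=
  biot_jkd_energy_decay_general η κ Ω m hη hκ hΩ ρ ρf ρw lam0 μ β us₁ us₂ W₁ W₂ hus₁ hus₂ hW₁ hW₂ K
    hK hsupp v₁ v₂ w₁ w₂ εxx εyy εxy trε ξ p σxx σyy σxy hv₁ hv₂ hw₁ hw₂ hεxx hεyy hεxy htrε hξ hp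
    hσxx hσyy hσxy ψ₁ ψ₂ hode₁ hode₂ hmom1x hmom1y hmom2x hmom2y c hc E hintψ hintD hswap D hD
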